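/- arXiv:1505.02261 — 3 statements merged into one kernel-verified Lean document; each statement's English description precedes it below -/
import Mathlib

section
/- Let m>0, s₀>0, 0<r≤1 and s > s₀/r. Let (M,μ) be a measure space, ι a countable index set, and (u_ξ)_{ξ∈ι}, (v_ξ)_{ξ∈ι} biorthogonal families in L²(μ) with ‖u_ξ‖_{L²}=‖v_ξ‖_{L²}=1 for all ξ. Let λ : ι → ℝ satisfy λ_ξ ≤ 0 for all ξ, and set ⟨ξ⟩ := (1+λ_ξ²)^{1/(2m)}; assume ∑_{ξ∈ι} ⟨ξ⟩^{-s₀} < ∞. Let A : L²(μ) → L²(μ) be a bounded linear operator such that for every f ∈ L²(μ), A f = ∑_{ξ∈ι} (1-λ_ξ)^{-s/m}·(∫_M f·\overline{v_ξ} dμ)·u_ξ, with the series converging in L²(μ). Then A is r-nuclear from L²(μ) to L²(μ). (This applies in particular to A = (I-L)^{-s/m} when -L is a positive operator with eigenvalues -λ_ξ and biorthogonal eigenfunction systems u_ξ, v_ξ.) -/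
open MeasureTheory
open scoped ENNReal

noncomputable section

/-- A bounded linear operator `T : B₁ → B₂` is `r`-nuclear if there exist a sequence of
continuous linear functionals `φ k` on `B₁` and a sequence `y k` in `B₂` such that
`T x = ∑ k, φ k x • y k` (converging in `B₂`) and `∑ k, ‖φ k‖^r * ‖y k‖^r < ∞`. -/
def IsRNuclear {B₁ B₂ : Type*} [NormedAddCommGroup B₁] [NormedSpace ℂ B₁]
    [NormedAddCommGroup B₂] [NormedSpace ℂ B₂] (r : ℝ) (T : B₁ →L[ℂ] B₂) : Prop :=
  ∃ (φ : ℕ → (B₁ →L[ℂ] ℂ)) (y : ℕ → B₂),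
    (∀ x, HasSum (fun k => φ k x • y k) (T x)) ∧
    Summable (fun k => ‖φ k‖ ^ r * ‖y k‖ ^ r)

/-!
The series defining `A` is already a nuclear decomposition, with rank-one terms
`f ↦ (1 - λ_ξ)^{-s/m} ⟨v_ξ, f⟩ u_ξ` of norm `(1 - λ_ξ)^{-s/m}`. Since `λ_ξ ≤ 0`, we have
`√(1 + λ_ξ²) ≤ 1 - λ_ξ`, so the `r`-th powers of these norms are dominated by
`⟨ξ⟩^{-s r} ≤ ⟨ξ⟩^{-s₀}`, which is summable by hypothesis.
-/

lemma Function.extend_zero_map₂ {ι α β γ κ : Type*} [Zero α] [Zero β] [Zero γ]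
    {e : ι → κ} (he : Function.Injective e) (F : α → β → γ) (hF : F 0 0 = 0)
    (f : ι → α) (g : ι → β) :
    (fun k => F (Function.extend e f 0 k) (Function.extend e g 0 k))
      = Function.extend e (fun i => F (f i) (g i)) 0 := by
  funext k
  by_cases hk : ∃ i, e i = k
  · obtain ⟨i, rfl⟩ := hk
    simp only [he.extend_apply]
  · simp only [Function.extend_apply' _ _ _ hk, Pi.zero_apply, hF]

theorem IsRNuclear.of_countable {B₁ B₂ ι : Type*} [NormedAddCommGroup B₁] [NormedSpace ℂ B₁]
    [NormedAddCommGroup B₂] [NormedSpace ℂ B₂] [Countable ι] {r : ℝ} (hr : r ≠ 0)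
    {T : B₁ →L[ℂ] B₂} (φ : ι → (B₁ →L[ℂ] ℂ)) (y : ι → B₂)
    (hT : ∀ x, HasSum (fun ξ => φ ξ x • y ξ) (T x))
    (hφy : Summable fun ξ => ‖φ ξ‖ ^ r * ‖y ξ‖ ^ r) :
    IsRNuclear r T := by
  let _ : Encodable ι := Encodable.ofCountable ι
  have he := @Encodable.encode_injective ι _
  refine ⟨Function.extend Encodable.encode φ 0, Function.extend Encodable.encode y 0,
    fun x => ?_, ?_⟩
  · rw [Function.extend_zero_map₂ he (fun (ψ : B₁ →L[ℂ] ℂ) z => ψ x • z) (by simp)]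
    exact (hasSum_extend_zero he).mpr (hT x)
  · rw [Function.extend_zero_map₂ he (fun (ψ : B₁ →L[ℂ] ℂ) (z : B₂) => ‖ψ‖ ^ r * ‖z‖ ^ r)
      (by simp [Real.zero_rpow hr])]
    exact (summable_extend_zero he).mpr hφy

lemma MeasureTheory.L2.inner_eq_integral_mul_conj {M : Type*} [MeasurableSpace M]
    {μ : Measure M} (f g : Lp ℂ 2 μ) :
    inner ℂ g f = ∫ x, f x * (starRingEnd ℂ) (g x) ∂μ := by
  simp only [L2.inner_def, RCLike.inner_apply]

lemma sqrt_one_add_sq_le_one_sub {l : ℝ} (hl : l ≤ 0) : √(1 + l ^ 2) ≤ 1 - l :=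
  Real.sqrt_le_iff.mpr ⟨by linarith, by nlinarith⟩

lemma one_sub_rpow_neg_le_one_add_sq_rpow {l a b : ℝ} (hl : l ≤ 0) (hb : 0 ≤ b)
    (hba : b ≤ a) : (1 - l) ^ (-a) ≤ (1 + l ^ 2) ^ (-b / 2) := by
  have hsqrt_pos : 0 < √(1 + l ^ 2) := Real.sqrt_pos.mpr (by positivity)
  calc (1 - l) ^ (-a) ≤ (1 - l) ^ (-b) :=
        Real.rpow_le_rpow_of_exponent_le (by linarith) (by linarith)
    _ ≤ √(1 + l ^ 2) ^ (-b) :=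
        Real.rpow_le_rpow_of_nonpos hsqrt_pos (sqrt_one_add_sq_le_one_sub hl) (by linarith)
    _ = (1 + l ^ 2) ^ (-b / 2) := by
        rw [Real.sqrt_eq_rpow, ← Real.rpow_mul (by positivity)]
        ring_nf

lemma rpow_one_sub_rpow_le_bracket {l m s s₀ r : ℝ} (hl : l ≤ 0) (hm : 0 < m)
    (hs₀ : 0 ≤ s₀) (hsr : s₀ ≤ s * r) :
    ((1 - l) ^ (-(s / m))) ^ r ≤ ((1 + l ^ 2) ^ (1 / (2 * m))) ^ (-s₀) := by
  rw [← Real.rpow_mul (by linarith), ← Real.rpow_mul (by positivity)]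
  convert one_sub_rpow_neg_le_one_add_sq_rpow hl (div_nonneg hs₀ hm.le)
    (div_le_div_of_nonneg_right hsr hm.le) using 2 <;> ring

theorem statement_6_general
    {M : Type*} [MeasurableSpace M] {μ : Measure M}
    {ι : Type*} [Countable ι]
    (m s₀ r s : ℝ) (hm : 0 < m) (hs₀ : 0 < s₀) (hr0 : 0 < r)
    (hs : s₀ / r < s)
    (u v : ι → Lp ℂ 2 μ)
    (hu : ∀ ξ : ι, ‖u ξ‖ = 1) (hv : ∀ ξ : ι, ‖v ξ‖ = 1)
    (lam : ι → ℝ) (hlam : ∀ ξ : ι, lam ξ ≤ 0)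
    (hsum : Summable fun ξ => ((1 + lam ξ ^ 2) ^ (1 / (2 * m))) ^ (-s₀))
    (A : Lp ℂ 2 μ →L[ℂ] Lp ℂ 2 μ)
    (hA : ∀ f : Lp ℂ 2 μ,
      HasSum (fun ξ =>
        ((((1 - lam ξ) ^ (-(s / m)) : ℝ) : ℂ)
          * ∫ x, f x * (starRingEnd ℂ) (v ξ x) ∂μ) • u ξ) (A f)) :
    IsRNuclear r A := by
  let φ : ι → (Lp ℂ 2 μ →L[ℂ] ℂ) :=
    fun ξ => (((1 - lam ξ) ^ (-(s / m)) : ℝ) : ℂ) • innerSL ℂ (v ξ)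
  have hφ_norm (ξ : ι) : ‖φ ξ‖ = (1 - lam ξ) ^ (-(s / m)) := by
    have hpos : 0 < 1 - lam ξ := by linarith [hlam ξ]
    simp only [φ, norm_smul, innerSL_apply_norm, hv, Complex.norm_real, Real.norm_eq_abs,
      abs_of_pos (Real.rpow_pos_of_pos hpos _), mul_one]
  have hsr : s₀ ≤ s * r := ((div_lt_iff₀ hr0).mp hs).le
  refine IsRNuclear.of_countable hr0.ne' φ u (fun f => ?_) ?_
  · simpa only [φ, FunLike.coe_smul, Pi.smul_apply, innerSL_apply_apply, smul_eq_mul,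
      L2.inner_eq_integral_mul_conj] using hA f
  · refine hsum.of_nonneg_of_le (fun ξ => by positivity) (fun ξ => ?_)
    rw [hφ_norm, hu, Real.one_rpow, mul_one]
    exact rpow_one_sub_rpow_le_bracket (hlam ξ) hm hs₀.le hsr

theorem statement_6
    {M : Type*} [MeasurableSpace M] {μ : Measure M}
    {ι : Type*} [Countable ι] [DecidableEq ι]
    (m s₀ r s : ℝ) (hm : 0 < m) (hs₀ : 0 < s₀) (hr0 : 0 < r) (hr1 : r ≤ 1)
    (hs : s₀ / r < s)
    (u v : ι → Lp ℂ 2 μ)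
    (hbi : ∀ ξ η : ι,
      (∫ x, u ξ x * (starRingEnd ℂ) (v η x) ∂μ) = if ξ = η then 1 else 0)
    (hu : ∀ ξ : ι, ‖u ξ‖ = 1) (hv : ∀ ξ : ι, ‖v ξ‖ = 1)
    (lam : ι → ℝ) (hlam : ∀ ξ : ι, lam ξ ≤ 0)
    (hsum : Summable fun ξ => ((1 + lam ξ ^ 2) ^ (1 / (2 * m))) ^ (-s₀))
    (A : Lp ℂ 2 μ →L[ℂ] Lp ℂ 2 μ)
    (hA : ∀ f : Lp ℂ 2 μ,
      HasSum (fun ξ =>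
        ((((1 - lam ξ) ^ (-(s / m)) : ℝ) : ℂ)
          * ∫ x, f x * (starRingEnd ℂ) (v ξ x) ∂μ) • u ξ) (A f)) :
    IsRNuclear r A :=
  statement_6_general m s₀ r s hm hs₀ hr0 hs u v hu hv lam hlam hsum A hA
end
end

section
/- Let 0<r≤1 and 1≤p₁≤2≤p₂<∞, with q₁ the conjugate exponent of p₁. Let (M,μ) be a finite measure space, ι a countable index set, w : ι → [1,∞), and (u_ξ)_{ξ∈ι}, (v_ξ)_{ξ∈ι} families in L²(μ)∩L^∞(μ) with ‖u_ξ‖_{L²}=‖v_ξ‖_{L²}=1, ‖u_ξ‖_{L^∞} ≤ C₁·w(ξ)^{ν₁} and ‖v_ξ‖_{L^∞} ≤ C₂·w(ξ)^{ν₂} for all ξ, where C₁,C₂,ν₁,ν₂ > 0. Let σ : M×ι → ℂ be measurable with |σ(x,ξ)| ≤ γ(ξ) for all (x,ξ) and some γ : ι → [0,∞), and assume ∑_{ξ∈ι} ( w(ξ)^{ν₁(1-2/p₂)+ν₂(2/p₁-1)} · γ(ξ) )^r < ∞. Let A : L^{p₁}(μ) → L^{p₂}(μ) be a bounded linear operator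 such that for every f ∈ L^{p₁}(μ), A f = ∑_{ξ∈ι} (∫_M f·\overline{v_ξ} dμ)·σ(·,ξ)·u_ξ, with the series converging in L^{p₂}(μ). Then A is r-nuclear from L^{p₁}(μ) to L^{p₂}(μ). -/
/-!
The operator is already written in nuclear form: `A f = ∑ φ_ξ(f) • y_ξ` with
`φ_ξ(f) = ∫ f · conj v_ξ` and `y_ξ = σ(·, ξ) · u_ξ`. Hölder gives `‖φ_ξ‖ ≤ ‖v_ξ‖_{q₁}` and
`‖y_ξ‖ ≤ γ(ξ) ‖u_ξ‖_{p₂}`. For an `L²`-normalised function, interpolating between `L²` and `L^∞`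
gives `‖f‖_p ≤ ‖f‖_∞ ^ (1 - 2/p)` for `p ≥ 2`, and `1 - 2/q₁ = 2/p₁ - 1`, so
`‖φ_ξ‖ ‖y_ξ‖ ≲ w(ξ) ^ (ν₁ (1 - 2/p₂) + ν₂ (2/p₁ - 1)) γ(ξ)`, whose `r`-th powers are summable.
-/

open MeasureTheory
open scoped ENNReal

noncomputable section

theorem IsRNuclear.of_hasSum {B₁ B₂ : Type*} [NormedAddCommGroup B₁] [NormedSpace ℂ B₁]
    [NormedAddCommGroup B₂] [NormedSpace ℂ B₂] {ι : Type*} [Countable ι] {r : ℝ} (hr : r ≠ 0)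
    {T : B₁ →L[ℂ] B₂} (φ : ι → B₁ →L[ℂ] ℂ) (y : ι → B₂)
    (hT : ∀ x, HasSum (fun i => φ i x • y i) (T x))
    (hφy : Summable fun i => ‖φ i‖ ^ r * ‖y i‖ ^ r) :
    IsRNuclear r T := by
  obtain ⟨e, he⟩ := exists_injective_nat ι
  refine ⟨Function.extend e φ 0, Function.extend e y 0, fun x => ?_, ?_⟩
  · refine (he.hasSum_iff fun k hk => ?_).mp ?_
    · simp [Function.extend_apply' _ _ _ (by simpa using hk)]
    · simpa [Function.comp_def, he.extend_apply] using hT x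
  · refine (he.summable_iff fun k hk => ?_).mp ?_
    · simp [Function.extend_apply' _ _ _ (by simpa using hk), Real.zero_rpow hr]
    · simpa [Function.comp_def, he.extend_apply] using hφy

theorem summable_rpow_mul_rpow_of_mul_le {ι : Type*} {a b c : ι → ℝ} {K r : ℝ} (hr : 0 ≤ r)
    (ha : ∀ i, 0 ≤ a i) (hb : ∀ i, 0 ≤ b i) (hc : ∀ i, 0 ≤ c i) (hK : 0 ≤ K)
    (habc : ∀ i, a i * b i ≤ K * c i) (hcr : Summable fun i => c i ^ r) :
    Summable fun i => a i ^ r * b i ^ r := by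
  refine .of_nonneg_of_le
    (fun i => mul_nonneg (Real.rpow_nonneg (ha i) r) (Real.rpow_nonneg (hb i) r))
    (fun i => ?_) (hcr.mul_left (K ^ r))
  rw [← Real.mul_rpow (ha i) (hb i), ← Real.mul_rpow hK (hc i)]
  exact Real.rpow_le_rpow (mul_nonneg (ha i) (hb i)) (habc i) hr

namespace ENNReal

theorem one_sub_two_div_toReal_nonneg {p : ℝ≥0∞} (hp : 2 ≤ p) : 0 ≤ 1 - 2 / p.toReal := by
  rcases eq_or_ne p ∞ with rfl | hp'
  · simp
  have : (2 : ℝ) ≤ p.toReal := by simpa using ENNReal.toReal_mono hp' hp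
  rw [sub_nonneg, div_le_one (by linarith)]
  exact this

namespace HolderConjugate

variable {p q : ℝ≥0∞} [p.HolderConjugate q]

theorem two_le_of_le_two (hp : p ≤ 2) : 2 ≤ q := by
  rw [← ENNReal.inv_le_inv, ← one_sub_inv p q, ← ENNReal.one_sub_inv_two]
  gcongr

theorem one_sub_two_div_toReal : 1 - 2 / q.toReal = 2 / p.toReal - 1 := by
  have h := congrArg ENNReal.toReal (inv_add_inv_eq_one p q)
  rw [ENNReal.toReal_add (by simpa using ne_zero p q) (by simpa using ne_zero q p),
    ENNReal.toReal_inv, ENNReal.toReal_inv, ENNReal.toReal_one] at h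
  simp only [div_eq_mul_inv]
  linarith

end HolderConjugate

end ENNReal

section Lp

variable {α : Type*} [MeasurableSpace α] {μ : Measure α}

theorem nonempty_of_eLpNorm_ne_zero {E : Type*} [NormedAddCommGroup E] {f : α → E}
    {p : ℝ≥0∞} (hf : eLpNorm f p μ ≠ 0) : Nonempty α := by
  by_contra h
  have : IsEmpty α := not_nonempty_iff.mp h
  exact hf (by simp [μ.eq_zero_of_isEmpty])

theorem eLpNorm_le_eLpNorm_rpow_mul_eLpNorm_top_rpow {E : Type*} [NormedAddCommGroup E]
    {f : α → E} {p q : ℝ≥0∞} (hq0 : q ≠ 0) (hq : q ≠ ∞) (hqp : q ≤ p)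
    (hf : AEStronglyMeasurable f μ) :
    eLpNorm f p μ ≤
      eLpNorm f q μ ^ (q.toReal / p.toReal) * eLpNorm f ∞ μ ^ (1 - q.toReal / p.toReal) := by
  rcases eq_or_ne p ∞ with rfl | hp
  · simp
  have hp0 : p ≠ 0 := ne_bot_of_le_ne_bot hq0 hqp
  have hq0' : 0 < q.toReal := ENNReal.toReal_pos hq0 hq
  have hp0' : 0 < p.toReal := ENNReal.toReal_pos hp0 hp
  have hqp' : q.toReal ≤ p.toReal := ENNReal.toReal_mono hp hqp
  set S := eLpNorm f ∞ μ
  -- `‖f‖^p = ‖f‖^q ‖f‖^(p - q) ≤ ‖f‖^q S^(p - q)` almost everywhere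
  have hpow : ∫⁻ x, ‖f x‖ₑ ^ p.toReal ∂μ ≤
      eLpNorm f q μ ^ q.toReal * S ^ (p.toReal - q.toReal) := by
    rw [eLpNorm_eq_eLpNorm' hq0 hq, ← lintegral_rpow_enorm_eq_rpow_eLpNorm' hq0',
      ← lintegral_mul_const'' _ (hf.enorm.pow_const _)]
    refine lintegral_mono_ae ((enorm_ae_le_eLpNormEssSup f μ).mono fun x hx => ?_)
    rw [← add_sub_cancel q.toReal p.toReal, ENNReal.rpow_add_of_nonneg _ _ hq0'.le (by linarith)]
    simp only [add_sub_cancel_left]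
    gcongr
    simpa [S] using hx
  rw [eLpNorm_eq_lintegral_rpow_enorm_toReal hp0 hp]
  calc (∫⁻ x, ‖f x‖ₑ ^ p.toReal ∂μ) ^ (1 / p.toReal)
      ≤ (eLpNorm f q μ ^ q.toReal * S ^ (p.toReal - q.toReal)) ^ (1 / p.toReal) := by gcongr
    _ = _ := by
      rw [ENNReal.mul_rpow_of_nonneg _ _ (by positivity), ← ENNReal.rpow_mul, ← ENNReal.rpow_mul]
      congr 2 <;> field_simp

theorem eLpNorm_le_ofReal_rpow_of_eLpNorm_two_eq_one {E : Type*} [NormedAddCommGroup E]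
    {f : α → E} {p : ℝ≥0∞} {c : ℝ} (h2p : 2 ≤ p) (hf : AEStronglyMeasurable f μ)
    (hf2 : eLpNorm f 2 μ = 1) (hc : 0 ≤ c) (hfc : eLpNorm f ∞ μ ≤ ENNReal.ofReal c) :
    eLpNorm f p μ ≤ ENNReal.ofReal (c ^ (1 - 2 / p.toReal)) := by
  have h := eLpNorm_le_eLpNorm_rpow_mul_eLpNorm_top_rpow two_ne_zero ENNReal.ofNat_ne_top h2p hf
  rw [hf2, ENNReal.one_rpow, one_mul, ENNReal.toReal_ofNat] at h
  rw [← ENNReal.ofReal_rpow_of_nonneg hc (ENNReal.one_sub_two_div_toReal_nonneg h2p)]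
  exact h.trans (by gcongr; exact ENNReal.one_sub_two_div_toReal_nonneg h2p)

theorem ContinuousLinearMap.norm_lpPairing_apply_apply_le {𝕜 E F G : Type*}
    [NontriviallyNormedField 𝕜] [NormedAddCommGroup E] [NormedAddCommGroup F]
    [NormedAddCommGroup G] [NormedSpace 𝕜 E] [NormedSpace 𝕜 F] [NormedSpace 𝕜 G]
    [NormedSpace ℝ G] [SMulCommClass ℝ 𝕜 G] [CompleteSpace G] {p q : ℝ≥0∞}
    [Fact (1 ≤ p)] [Fact (1 ≤ q)] [p.HolderConjugate q] (B : E →L[𝕜] F →L[𝕜] G)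
    (f : Lp E p μ) (g : Lp F q μ) :
    ‖B.lpPairing μ p q f g‖ ≤ ‖B‖ * ‖f‖ * ‖g‖ := by
  have h := L1.norm_integral_le (B.holder 1 f g)
  rw [L1.integral_eq' 𝕜] at h
  exact h.trans (B.norm_holder_apply_apply_le f g)

theorem exists_continuousLinearMap_integral_mul_conj_norm_le {𝕜 : Type*} [RCLike 𝕜] {p q : ℝ≥0∞}
    [Fact (1 ≤ p)] [Fact (1 ≤ q)] [p.HolderConjugate q] {v : α → 𝕜} (hv : MemLp v q μ) :
    ∃ φ : Lp 𝕜 p μ →L[𝕜] 𝕜,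
      (∀ f, φ f = ∫ x, f x * starRingEnd 𝕜 (v x) ∂μ) ∧ ‖φ‖ ≤ (eLpNorm v q μ).toReal := by
  let B := ContinuousLinearMap.mul 𝕜 𝕜
  let g : Lp 𝕜 q μ := hv.star.toLp
  refine ⟨(B.lpPairing μ p q).flip g, fun f => ?_, ?_⟩
  · rw [ContinuousLinearMap.flip_apply, ContinuousLinearMap.lpPairing_eq_integral]
    refine integral_congr_ae ?_
    filter_upwards [hv.star.coeFn_toLp] with x hx
    simp [B, g, hx]
  · have hg : ‖g‖ = (eLpNorm v q μ).toReal := by simp [g, Lp.norm_toLp]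
    refine hg ▸ ContinuousLinearMap.opNorm_le_bound _ (norm_nonneg g) fun f => ?_
    calc ‖B.lpPairing μ p q f g‖ ≤ ‖B‖ * ‖f‖ * ‖g‖ := B.norm_lpPairing_apply_apply_le f g
      _ ≤ ‖g‖ * ‖f‖ := by
        rw [mul_comm ‖g‖, mul_assoc]
        exact mul_le_of_le_one_left (by positivity) (ContinuousLinearMap.opNorm_mul_le 𝕜 𝕜)

theorem exists_continuousLinearMap_integral_mul_conj_of_eLpNorm_two_eq_one {𝕜 : Type*} [RCLike 𝕜]
    {p q : ℝ≥0∞} [Fact (1 ≤ p)] [Fact (1 ≤ q)] [p.HolderConjugate q] (hp : p ≤ 2) {v : α → 𝕜}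
    {c : ℝ} (hv : AEStronglyMeasurable v μ) (hv2 : eLpNorm v 2 μ = 1) (hc : 0 ≤ c)
    (hvc : eLpNorm v ∞ μ ≤ ENNReal.ofReal c) :
    ∃ φ : Lp 𝕜 p μ →L[𝕜] 𝕜,
      (∀ f, φ f = ∫ x, f x * starRingEnd 𝕜 (v x) ∂μ) ∧ ‖φ‖ ≤ c ^ (2 / p.toReal - 1) := by
  have hvq := eLpNorm_le_ofReal_rpow_of_eLpNorm_two_eq_one
    (ENNReal.HolderConjugate.two_le_of_le_two (q := q) hp) hv hv2 hc hvc
  rw [ENNReal.HolderConjugate.one_sub_two_div_toReal (p := p)] at hvq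
  obtain ⟨φ, hφv, hφ⟩ := exists_continuousLinearMap_integral_mul_conj_norm_le (p := p)
    ⟨hv, hvq.trans_lt ENNReal.ofReal_lt_top⟩
  exact ⟨φ, hφv, hφ.trans (ENNReal.toReal_le_of_le_ofReal (Real.rpow_nonneg hc _) hvq)⟩

theorem norm_toLp_mul_le_of_eLpNorm_two_eq_one {𝕜 : Type*} [RCLike 𝕜] {p : ℝ≥0∞} [Fact (1 ≤ p)]
    {σ u : α → 𝕜} {γ c : ℝ} (h2p : 2 ≤ p) (hσu : MemLp (fun x => σ x * u x) p μ)
    (hσ : ∀ x, ‖σ x‖ ≤ γ) (hγ : 0 ≤ γ) (hu : AEStronglyMeasurable u μ)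
    (hu2 : eLpNorm u 2 μ = 1) (hc : 0 ≤ c) (huc : eLpNorm u ∞ μ ≤ ENNReal.ofReal c) :
    ‖hσu.toLp‖ ≤ γ * c ^ (1 - 2 / p.toReal) := by
  rw [Lp.norm_toLp]
  refine ENNReal.toReal_le_of_le_ofReal (mul_nonneg hγ (Real.rpow_nonneg hc _)) ?_
  calc eLpNorm (fun x => σ x * u x) p μ ≤ ENNReal.ofReal γ * eLpNorm u p μ :=
        eLpNorm_le_mul_eLpNorm_of_ae_le_mul
          (.of_forall fun x => by rw [norm_mul]; gcongr; exact hσ x) p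
    _ ≤ ENNReal.ofReal γ * ENNReal.ofReal (c ^ (1 - 2 / p.toReal)) := by
        gcongr
        exact eLpNorm_le_ofReal_rpow_of_eLpNorm_two_eq_one h2p hu hu2 hc huc
    _ = ENNReal.ofReal (γ * c ^ (1 - 2 / p.toReal)) := (ENNReal.ofReal_mul hγ).symm

end Lp

theorem statement_9_general
    {M : Type*} [MeasurableSpace M] {μ : Measure M}
    {ι : Type*} [Countable ι]
    (r : ℝ) (hr0 : 0 < r)
    (p₁ p₂ q₁ : ℝ≥0∞) [Fact (1 ≤ p₁)] [Fact (1 ≤ p₂)] [Fact (1 ≤ q₁)]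
    (hp₁2 : p₁ ≤ 2) (h2p₂ : 2 ≤ p₂)
    (hq : 1 / p₁ + 1 / q₁ = 1)
    (w : ι → ℝ) (hw : ∀ ξ, 1 ≤ w ξ)
    (C₁ C₂ ν₁ ν₂ : ℝ) (hC₁ : 0 < C₁) (hC₂ : 0 < C₂)
    (u v : ι → M → ℂ)
    (hu2 : ∀ ξ, MemLp (u ξ) 2 μ) (hv2 : ∀ ξ, MemLp (v ξ) 2 μ)
    (hun : ∀ ξ, eLpNorm (u ξ) 2 μ = 1) (hvn : ∀ ξ, eLpNorm (v ξ) 2 μ = 1)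
    (hub : ∀ ξ, eLpNorm (u ξ) ∞ μ ≤ ENNReal.ofReal (C₁ * w ξ ^ ν₁))
    (hvb : ∀ ξ, eLpNorm (v ξ) ∞ μ ≤ ENNReal.ofReal (C₂ * w ξ ^ ν₂))
    (σ : ι → M → ℂ)
    (γ : ι → ℝ) (hγ : ∀ ξ x, ‖σ ξ x‖ ≤ γ ξ)
    (hsum : Summable fun ξ =>
      (w ξ ^ (ν₁ * (1 - 2 / p₂.toReal) + ν₂ * (2 / p₁.toReal - 1)) * γ ξ) ^ r)
    (hmem : ∀ ξ, MemLp (fun x => σ ξ x * u ξ x) p₂ μ)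
    (A : Lp ℂ p₁ μ →L[ℂ] Lp ℂ p₂ μ)
    (hA : ∀ f : Lp ℂ p₁ μ,
      HasSum (fun ξ => (∫ x, f x * (starRingEnd ℂ) (v ξ x) ∂μ)
        • MemLp.toLp (fun x => σ ξ x * u ξ x) (hmem ξ)) (A f)) :
    IsRNuclear r A := by
  have : p₁.HolderConjugate q₁ := ENNReal.holderConjugate_iff.mpr (by simpa only [one_div] using hq)
  set e₁ := 1 - 2 / p₂.toReal
  set e₂ := 2 / p₁.toReal - 1
  have hw0 ξ : 0 < w ξ := one_pos.trans_le (hw ξ)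
  have hc₁ ξ : 0 ≤ C₁ * w ξ ^ ν₁ := by have := hw0 ξ; positivity
  have hc₂ ξ : 0 ≤ C₂ * w ξ ^ ν₂ := by have := hw0 ξ; positivity
  have hγ0 ξ : 0 ≤ γ ξ :=
    have ⟨x⟩ := nonempty_of_eLpNorm_ne_zero ((hun ξ).trans_ne one_ne_zero)
    (norm_nonneg _).trans (hγ ξ x)
  choose φ hφv hφ using fun ξ =>
    exists_continuousLinearMap_integral_mul_conj_of_eLpNorm_two_eq_one (p := p₁) (q := q₁)
      hp₁2 (hv2 ξ).1 (hvn ξ) (hc₂ ξ) (hvb ξ)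
  have hy ξ := norm_toLp_mul_le_of_eLpNorm_two_eq_one h2p₂ (hmem ξ) (hγ ξ) (hγ0 ξ) (hu2 ξ).1
    (hun ξ) (hc₁ ξ) (hub ξ)
  refine IsRNuclear.of_hasSum hr0.ne' φ _ (fun f => by simpa only [hφv] using hA f) ?_
  refine summable_rpow_mul_rpow_of_mul_le hr0.le (fun _ => norm_nonneg _) (fun _ => norm_nonneg _)
    (fun ξ => mul_nonneg (Real.rpow_nonneg (hw0 ξ).le _) (hγ0 ξ))
    (by positivity : 0 ≤ C₁ ^ e₁ * C₂ ^ e₂) (fun ξ => ?_) hsum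
  calc ‖φ ξ‖ * ‖(hmem ξ).toLp‖ ≤ (C₂ * w ξ ^ ν₂) ^ e₂ * (γ ξ * (C₁ * w ξ ^ ν₁) ^ e₁) :=
        mul_le_mul (hφ ξ) (hy ξ) (norm_nonneg _) (Real.rpow_nonneg (hc₂ ξ) _)
    _ = C₁ ^ e₁ * C₂ ^ e₂ * (w ξ ^ (ν₁ * e₁ + ν₂ * e₂) * γ ξ) := by
      have hwν₁ := Real.rpow_nonneg (hw0 ξ).le ν₁
      have hwν₂ := Real.rpow_nonneg (hw0 ξ).le ν₂
      rw [Real.mul_rpow hC₂.le hwν₂, Real.mul_rpow hC₁.le hwν₁, ← Real.rpow_mul (hw0 ξ).le,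
        ← Real.rpow_mul (hw0 ξ).le, Real.rpow_add (hw0 ξ)]
      ring

theorem statement_9
    {M : Type*} [MeasurableSpace M] {μ : Measure M} [IsFiniteMeasure μ]
    {ι : Type*} [Countable ι]
    (r : ℝ) (hr0 : 0 < r) (hr1 : r ≤ 1)
    (p₁ p₂ q₁ : ℝ≥0∞) [Fact (1 ≤ p₁)] [Fact (1 ≤ p₂)] [Fact (1 ≤ q₁)]
    (hp₁2 : p₁ ≤ 2) (h2p₂ : 2 ≤ p₂) (hp₂' : p₂ ≠ ∞)
    (hq : 1 / p₁ + 1 / q₁ = 1)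
    (w : ι → ℝ) (hw : ∀ ξ, 1 ≤ w ξ)
    (C₁ C₂ ν₁ ν₂ : ℝ) (hC₁ : 0 < C₁) (hC₂ : 0 < C₂) (hν₁ : 0 < ν₁) (hν₂ : 0 < ν₂)
    (u v : ι → M → ℂ)
    (hu2 : ∀ ξ, MemLp (u ξ) 2 μ) (hv2 : ∀ ξ, MemLp (v ξ) 2 μ)
    (huI : ∀ ξ, MemLp (u ξ) ∞ μ) (hvI : ∀ ξ, MemLp (v ξ) ∞ μ)
    (hun : ∀ ξ, eLpNorm (u ξ) 2 μ = 1) (hvn : ∀ ξ, eLpNorm (v ξ) 2 μ = 1)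
    (hub : ∀ ξ, eLpNorm (u ξ) ∞ μ ≤ ENNReal.ofReal (C₁ * w ξ ^ ν₁))
    (hvb : ∀ ξ, eLpNorm (v ξ) ∞ μ ≤ ENNReal.ofReal (C₂ * w ξ ^ ν₂))
    (σ : ι → M → ℂ) (hσm : ∀ ξ, AEStronglyMeasurable (σ ξ) μ)
    (γ : ι → ℝ) (hγ : ∀ ξ x, ‖σ ξ x‖ ≤ γ ξ)
    (hsum : Summable fun ξ =>
      (w ξ ^ (ν₁ * (1 - 2 / p₂.toReal) + ν₂ * (2 / p₁.toReal - 1)) * γ ξ) ^ r)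
    (hmem : ∀ ξ, MemLp (fun x => σ ξ x * u ξ x) p₂ μ)
    (A : Lp ℂ p₁ μ →L[ℂ] Lp ℂ p₂ μ)
    (hA : ∀ f : Lp ℂ p₁ μ,
      HasSum (fun ξ => (∫ x, f x * (starRingEnd ℂ) (v ξ x) ∂μ)
        • MemLp.toLp (fun x => σ ξ x * u ξ x) (hmem ξ)) (A f)) :
    IsRNuclear r A :=
  statement_9_general r hr0 p₁ p₂ q₁ hp₁2 h2p₂ hq w hw C₁ C₂ ν₁ ν₂ hC₁ hC₂ u v hu2 hv2 hun hvn hub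
    hvb σ γ hγ hsum hmem A hA
end
end

section
/- Let (M,μ) be a finite measure space, ι a countable index set, and (u_ξ)_{ξ∈ι}, (v_ξ)_{ξ∈ι} families in L²(μ) with ‖u_ξ‖_{L²}=1 for all ξ. Assume there is a constant ℓ > 0 such that ∑_{ξ∈ι} |∫_M f·\overline{v_ξ} dμ|² ≤ ℓ²·‖f‖_{L²}² for every f ∈ L²(μ). Then for all f, g ∈ L²(μ): ∑_{ξ∈ι} |(∫_M f·\overline{v_ξ} dμ)·(∫_M g·\overline{v_ξ} dμ)| · ‖u_ξ‖_{L¹(μ)} ≤ ℓ²·μ(M)^{1/2}·‖f‖_{L²}·‖g‖_{L²}; in particular the series f ∗_L g := ∑_{ξ∈ι} (∫_M f·\overline{v_ξ} dμ)·(∫_M g·\overline{v_ξ} dμ)·u_ξ converges absolutely in L¹(μ) and ‖f ∗_L g‖_{L¹(μ)} ≤ ℓ²·μ(M)^{1/2}·‖f‖_{L²}·‖g‖_{L²}. -/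
/-! By Cauchy–Schwarz and the Bessel bound, `∑ |⟨f, v_ξ⟩ ⟨g, v_ξ⟩| ≤ ℓ² ‖f‖ ‖g‖`, while Hölder on
a finite measure space gives `‖u_ξ‖₁ ≤ μ(M)^{1/2} ‖u_ξ‖₂ = μ(M)^{1/2}`. Hence the series defining
`f ∗_L g` converges absolutely in the Banach space `L¹`. -/

open MeasureTheory
open scoped ENNReal

noncomputable section

/-- On a finite measure space, an element of `L²` is also in `L¹`; this is the corresponding
element of `L¹`. -/
def uL1 {M : Type*} [MeasurableSpace M] {μ : Measure M} [IsFiniteMeasure μ]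
    (u : Lp ℂ 2 μ) : Lp ℂ 1 μ :=
  MemLp.toLp u ((Lp.memLp u).mono_exponent (by norm_num))

theorem Real.summable_mul_and_tsum_mul_le_sqrt_mul_sqrt {ι : Type*} {a b : ι → ℝ}
    (ha : ∀ i, 0 ≤ a i) (hb : ∀ i, 0 ≤ b i)
    (ha2 : Summable fun i => a i ^ 2) (hb2 : Summable fun i => b i ^ 2) :
    Summable (fun i => a i * b i) ∧
      ∑' i, a i * b i ≤ √(∑' i, a i ^ 2) * √(∑' i, b i ^ 2) := by
  have hpartial : ∀ s : Finset ι, ∑ i ∈ s, a i * b i ≤ √(∑' i, a i ^ 2) * √(∑' i, b i ^ 2) :=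
    fun s => (Real.sum_mul_le_sqrt_mul_sqrt s a b).trans <| by
      gcongr
      · exact ha2.sum_le_tsum s fun i _ => sq_nonneg (a i)
      · exact hb2.sum_le_tsum s fun i _ => sq_nonneg (b i)
  have hnonneg : 0 ≤ fun i => a i * b i := fun i => mul_nonneg (ha i) (hb i)
  exact ⟨summable_of_sum_le hnonneg hpartial, Real.tsum_le_of_sum_le hnonneg hpartial⟩

theorem Lp.toReal_eLpNorm_one_le {M E : Type*} [MeasurableSpace M] {μ : Measure M}
    [IsFiniteMeasure μ] [NormedAddCommGroup E] (u : Lp E 2 μ) :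
    (eLpNorm u 1 μ).toReal ≤ (μ Set.univ).toReal ^ (1 / 2 : ℝ) * ‖u‖ := by
  have hholder := eLpNorm_le_eLpNorm_mul_rpow_measure_univ (μ := μ) (p := 1) (q := 2)
    (by norm_num) (Lp.aestronglyMeasurable u)
  norm_num at hholder
  rw [Lp.norm_def, mul_comm, ENNReal.toReal_rpow, ← ENNReal.toReal_mul]
  exact ENNReal.toReal_mono (ENNReal.mul_ne_top (Lp.eLpNorm_ne_top u)
    (ENNReal.rpow_ne_top_of_nonneg (by norm_num) (measure_ne_top μ _))) hholder

theorem norm_uL1 {M : Type*} [MeasurableSpace M] {μ : Measure M} [IsFiniteMeasure μ]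
    (u : Lp ℂ 2 μ) : ‖uL1 u‖ = (eLpNorm u 1 μ).toReal :=
  Lp.norm_toLp _ _

theorem exists_hasSum_norm_le_of_summable_norm {ι E : Type*} [NormedAddCommGroup E]
    [CompleteSpace E] {x : ι → E} {K : ℝ} (hx : Summable fun i => ‖x i‖)
    (hK : ∑' i, ‖x i‖ ≤ K) : ∃ F, HasSum x F ∧ ‖F‖ ≤ K :=
  ⟨_, hx.of_norm.hasSum, (norm_tsum_le_tsum_norm hx).trans hK⟩

theorem statement_17_general
    {M : Type*} [MeasurableSpace M] {μ : Measure M} [IsFiniteMeasure μ]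
    {ι : Type*}
    (u v : ι → Lp ℂ 2 μ) (hu : ∀ ξ : ι, ‖u ξ‖ = 1)
    (ℓ : ℝ)
    (hbessel : ∀ f : Lp ℂ 2 μ,
      Summable (fun ξ => ‖∫ x, f x * (starRingEnd ℂ) (v ξ x) ∂μ‖ ^ 2) ∧
      ∑' ξ, ‖∫ x, f x * (starRingEnd ℂ) (v ξ x) ∂μ‖ ^ 2 ≤ ℓ ^ 2 * ‖f‖ ^ 2) :
    ∀ f g : Lp ℂ 2 μ,
      Summable (fun ξ =>
        ‖(∫ x, f x * (starRingEnd ℂ) (v ξ x) ∂μ) * (∫ x, g x * (starRingEnd ℂ) (v ξ x) ∂μ)‖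
          * (eLpNorm (u ξ) 1 μ).toReal) ∧
      (∑' ξ,
        ‖(∫ x, f x * (starRingEnd ℂ) (v ξ x) ∂μ) * (∫ x, g x * (starRingEnd ℂ) (v ξ x) ∂μ)‖
          * (eLpNorm (u ξ) 1 μ).toReal)
        ≤ ℓ ^ 2 * (μ Set.univ).toReal ^ (1 / 2 : ℝ) * ‖f‖ * ‖g‖ ∧
      ∃ F : Lp ℂ 1 μ,
        HasSum (fun ξ =>
          ((∫ x, f x * (starRingEnd ℂ) (v ξ x) ∂μ) * (∫ x, g x * (starRingEnd ℂ) (v ξ x) ∂μ))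
            • uL1 (u ξ)) F ∧
        ‖F‖ ≤ ℓ ^ 2 * (μ Set.univ).toReal ^ (1 / 2 : ℝ) * ‖f‖ * ‖g‖ := by
  intro f g
  set c : Lp ℂ 2 μ → ι → ℝ := fun h ξ => ‖∫ x, h x * (starRingEnd ℂ) (v ξ x) ∂μ‖
  set C : ℝ := (μ Set.univ).toReal ^ (1 / 2 : ℝ)
  have hbessel_sqrt : ∀ h, √(∑' ξ, c h ξ ^ 2) ≤ |ℓ| * ‖h‖ := fun h => by
    simpa [Real.sqrt_mul (sq_nonneg ℓ), Real.sqrt_sq_eq_abs] using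
      Real.sqrt_le_sqrt (hbessel h).2
  obtain ⟨hsum, hcs⟩ := Real.summable_mul_and_tsum_mul_le_sqrt_mul_sqrt
    (fun ξ => norm_nonneg _) (fun ξ => norm_nonneg _) (hbessel f).1 (hbessel g).1
  have hweight : ∀ ξ, (eLpNorm (u ξ) 1 μ).toReal ≤ C := fun ξ => by
    simpa only [hu ξ, mul_one] using Lp.toReal_eLpNorm_one_le (u ξ)
  have hterm : ∀ ξ, c f ξ * c g ξ * (eLpNorm (u ξ) 1 μ).toReal ≤ c f ξ * c g ξ * C :=
    fun ξ => mul_le_mul_of_nonneg_left (hweight ξ) (by positivity)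
  have hsummable : Summable fun ξ => c f ξ * c g ξ * (eLpNorm (u ξ) 1 μ).toReal :=
    (hsum.mul_right C).of_nonneg_of_le (fun ξ => by positivity) hterm
  have hbound : ∑' ξ, c f ξ * c g ξ * (eLpNorm (u ξ) 1 μ).toReal ≤ ℓ ^ 2 * C * ‖f‖ * ‖g‖ :=
    calc _ ≤ (∑' ξ, c f ξ * c g ξ) * C := by
          rw [← tsum_mul_right]; exact hsummable.tsum_le_tsum hterm (hsum.mul_right C)
      _ ≤ (|ℓ| * ‖f‖) * (|ℓ| * ‖g‖) * C := by
          gcongr; exact hcs.trans (by gcongr <;> apply hbessel_sqrt)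
      _ = ℓ ^ 2 * C * ‖f‖ * ‖g‖ := by rw [← sq_abs ℓ]; ring
  simp only [norm_mul] at hsummable hbound ⊢
  refine ⟨hsummable, hbound, exists_hasSum_norm_le_of_summable_norm ?_ ?_⟩ <;>
    simpa only [norm_smul, norm_mul, norm_uL1]

theorem statement_17
    {M : Type*} [MeasurableSpace M] {μ : Measure M} [IsFiniteMeasure μ]
    {ι : Type*} [Countable ι]
    (u v : ι → Lp ℂ 2 μ) (hu : ∀ ξ : ι, ‖u ξ‖ = 1)
    (ℓ : ℝ) (hℓ : 0 < ℓ)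
    (hbessel : ∀ f : Lp ℂ 2 μ,
      Summable (fun ξ => ‖∫ x, f x * (starRingEnd ℂ) (v ξ x) ∂μ‖ ^ 2) ∧
      ∑' ξ, ‖∫ x, f x * (starRingEnd ℂ) (v ξ x) ∂μ‖ ^ 2 ≤ ℓ ^ 2 * ‖f‖ ^ 2) :
    ∀ f g : Lp ℂ 2 μ,
      Summable (fun ξ =>
        ‖(∫ x, f x * (starRingEnd ℂ) (v ξ x) ∂μ) * (∫ x, g x * (starRingEnd ℂ) (v ξ x) ∂μ)‖
          * (eLpNorm (u ξ) 1 μ).toReal) ∧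
      (∑' ξ,
        ‖(∫ x, f x * (starRingEnd ℂ) (v ξ x) ∂μ) * (∫ x, g x * (starRingEnd ℂ) (v ξ x) ∂μ)‖
          * (eLpNorm (u ξ) 1 μ).toReal)
        ≤ ℓ ^ 2 * (μ Set.univ).toReal ^ (1 / 2 : ℝ) * ‖f‖ * ‖g‖ ∧
      ∃ F : Lp ℂ 1 μ,
        HasSum (fun ξ =>
          ((∫ x, f x * (starRingEnd ℂ) (v ξ x) ∂μ) * (∫ x, g x * (starRingEnd ℂ) (v ξ x) ∂μ))
            • uL1 (u ξ)) F ∧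
        ‖F‖ ≤ ℓ ^ 2 * (μ Set.univ).toReal ^ (1 / 2 : ℝ) * ‖f‖ * ‖g‖ :=
  statement_17_general u v hu ℓ hbessel
end
end
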